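/- arXiv:2405.01263 — 4 statements merged into one kernel-verified Lean document; each statement's English description precedes it below -/
import Mathlib

section
/- For online gradient descent on a bounded convex set F with L-Lipschitz convex cost functions, if the state is updated every step but only 'revealed' (used) at multiples of B (i.e., the frozen algorithm plays f'_t = f_{⌊t/B⌋·B}), then with learning rate η = radius(F)/(L·√(TB)), the regret of the frozen algorithm over T steps is at most radius(F)·L·√(TB). -/
/-!
Projection onto a convex set does not increase distances to points of the set, so a projected
gradient step satisfies `2η (c_t(f_t) - c_t(x)) ≤ ‖f_t - x‖² - ‖f_{t+1} - x‖² + η²L²`, which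
telescopes. Playing the stale point `f_{⌊t/B⌋B}` instead of `f_t` costs at most
`L · (t mod B) · ηL` more, because every step moves the iterate by at most `ηL`, and
`∑_{t<T} (2 (t mod B) + 1) ≤ TB`. Hence `2η · regret ≤ R² + η²L²TB`, and the chosen `η` makes
both terms equal to `η R L √(TB)`.
-/

open RealInnerProductSpace Finset NNReal

theorem Nat.add_one_mod_eq_ite {B : ℕ} (hB : 0 < B) (T : ℕ) :
    (T + 1) % B = if T % B + 1 = B then 0 else T % B + 1 := by
  have hr := Nat.mod_lt T hB
  rcases Nat.lt_or_ge 1 B with hB1 | hB1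
  · rw [Nat.add_mod_eq_ite, Nat.mod_eq_of_lt hB1]
    split_ifs <;> omega
  · obtain rfl : B = 1 := by omega
    simp [Nat.mod_one]

-- `T % B * (B - T % B)` is the defect of the unfinished last block.
theorem sum_range_two_mul_mod_add_one_add {B : ℕ} (hB : 0 < B) (T : ℕ) :
    ∑ t ∈ range T, (2 * (t % B) + 1) + T % B * (B - T % B) = T * B := by
  induction T with
  | zero => simp
  | succ T ih =>
    have hr := Nat.mod_lt T hB
    rw [sum_range_succ, Nat.add_one_mod_eq_ite hB]
    generalize T % B = r at ih hr ⊢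
    obtain ⟨k, rfl⟩ : ∃ k, B = r + 1 + k := ⟨B - r - 1, by omega⟩
    split_ifs with hlast
    · obtain rfl : k = 0 := by omega
      simp only [add_zero, add_tsub_cancel_left, mul_one] at ih
      simp only [zero_mul, add_zero]
      nlinarith [ih]
    · rw [show r + 1 + k - r = k + 1 by omega] at ih
      rw [show r + 1 + k - (r + 1) = k by omega]
      nlinarith [ih]

theorem sum_range_two_mul_mod_add_one_le {B : ℕ} (hB : 0 < B) (T : ℕ) :
    ∑ t ∈ range T, (2 * (t % B) + 1) ≤ T * B :=
  (Nat.le_add_right _ _).trans (sum_range_two_mul_mod_add_one_add hB T).le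

theorem norm_sub_le_mul_of_norm_succ_sub_le {E : Type*} [SeminormedAddCommGroup E] {f : ℕ → E}
    {d : ℝ} (hf : ∀ n, ‖f (n + 1) - f n‖ ≤ d) (m k : ℕ) : ‖f (m + k) - f m‖ ≤ k * d := by
  induction k with
  | zero => simp
  | succ k ih =>
    calc ‖f (m + (k + 1)) - f m‖ ≤ ‖f (m + k + 1) - f (m + k)‖ + ‖f (m + k) - f m‖ :=
          norm_sub_le_norm_sub_add_norm_sub _ _ _
      _ ≤ d + k * d := add_le_add (hf _) ih
      _ = (k + 1 : ℕ) * d := by push_cast; ring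

section Hilbert
variable {E : Type*} [NormedAddCommGroup E] [InnerProductSpace ℝ E]

theorem Convex.norm_sub_le_of_isMinOn {K : Set E} (hK : Convex ℝ K) {y p x : E} (hp : p ∈ K)
    (hmin : IsMinOn (‖· - y‖) K p) (hx : x ∈ K) : ‖p - x‖ ≤ ‖y - x‖ := by
  have hinf : ‖y - p‖ = ⨅ w : K, ‖y - w‖ := by
    have : Nonempty K := ⟨⟨p, hp⟩⟩
    refine le_antisymm (le_ciInf fun w => ?_) (ciInf_le ⟨0, ?_⟩ (⟨p, hp⟩ : K))
    · simpa only [norm_sub_rev y] using isMinOn_iff.1 hmin w w.2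
    · rintro _ ⟨w, rfl⟩; exact norm_nonneg _
  have hobtuse := (norm_eq_iInf_iff_real_inner_le_zero hK hp).1 hinf x hx
  have hpyth : ‖y - x‖ ^ 2 = ‖y - p‖ ^ 2 - 2 * ⟪y - p, x - p⟫ + ‖x - p‖ ^ 2 := by
    rw [← norm_sub_sq_real, sub_sub_sub_cancel_right]
  rw [norm_sub_rev p x]
  nlinarith [norm_nonneg (y - x), norm_nonneg (x - p), sq_nonneg ‖y - p‖]

theorem ConvexOn.le_sub_of_hasFDerivAt {K : Set E} {φ : E → ℝ} (hφ : ConvexOn ℝ K φ)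
    {φ' : E →L[ℝ] ℝ} {x y : E} (hd : HasFDerivAt φ φ' y) (hy : y ∈ K) (hx : x ∈ K) :
    φ' (x - y) ≤ φ x - φ y := by
  set A : ℝ →ᵃ[ℝ] E := AffineMap.lineMap y x
  have hA : ∀ s : ℝ, A s = s • (x - y) + y := fun s => AffineMap.lineMap_apply_module' ..
  have hline : HasDerivAt (φ ∘ A) (φ' (x - y)) 0 := by
    have hd0 : HasFDerivAt φ φ' (A 0) := by simpa [A] using hd
    have := hd0.comp_hasDerivAt (x := (0 : ℝ)) A.hasDerivAt
    simpa [A] using this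
  have := (hφ.comp_affineMap A).le_slope_of_hasDerivAt (by simpa [A] using hy)
    (by simpa [A] using hx) one_pos hline
  simpa [slope_def_field, A] using this

variable [CompleteSpace E]

theorem ConvexOn.inner_le_sub_of_hasGradientAt {K : Set E} {φ : E → ℝ} (hφ : ConvexOn ℝ K φ)
    {g x y : E} (hg : HasGradientAt φ g y) (hy : y ∈ K) (hx : x ∈ K) :
    ⟪g, x - y⟫ ≤ φ x - φ y := by
  simpa [InnerProductSpace.toDual_apply_apply] using hφ.le_sub_of_hasFDerivAt hg.hasFDerivAt hy hx

theorem HasGradientAt.norm_le_of_lipschitz {φ : E → ℝ} {g y : E} {L : ℝ≥0}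
    (hg : HasGradientAt φ g y) (hφ : LipschitzWith L φ) : ‖g‖ ≤ L := by
  simpa using hg.hasFDerivAt.le_of_lipschitz hφ

theorem ConvexOn.two_mul_sub_le_of_isMinOn {K : Set E} (hK : Convex ℝ K) {φ : E → ℝ}
    (hφ : ConvexOn ℝ K φ) {g y p x : E} {η : ℝ} (hη : 0 ≤ η) (hg : HasGradientAt φ g y)
    (hy : y ∈ K) (hp : p ∈ K) (hmin : IsMinOn (‖· - (y - η • g)‖) K p) (hx : x ∈ K) :
    2 * η * (φ y - φ x) ≤ ‖y - x‖ ^ 2 - ‖p - x‖ ^ 2 + η ^ 2 * ‖g‖ ^ 2 := by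
  have hcontract := hK.norm_sub_le_of_isMinOn hp hmin hx
  have hexpand : ‖y - η • g - x‖ ^ 2 = ‖y - x‖ ^ 2 - 2 * η * ⟪g, y - x⟫ + η ^ 2 * ‖g‖ ^ 2 := by
    rw [sub_right_comm, norm_sub_sq_real, real_inner_smul_right, norm_smul, mul_pow,
      Real.norm_eq_abs, sq_abs, real_inner_comm]
    ring
  have hfirst := hφ.inner_le_sub_of_hasGradientAt hg hy hx
  have hswap : ⟪g, y - x⟫ = -⟪g, x - y⟫ := by rw [← inner_neg_right, neg_sub]
  nlinarith [pow_le_pow_left₀ (norm_nonneg _) hcontract 2]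

theorem two_mul_frozen_regret_le_of_isMinOn {K : Set E} (hK : Convex ℝ K) {c : ℕ → E → ℝ}
    {L : ℝ≥0} (hc : ∀ t, ConvexOn ℝ K (c t)) (hlip : ∀ t, LipschitzWith L (c t))
    {f g : ℕ → E} (hg : ∀ t, HasGradientAt (c t) (g t) (f t)) (hf : ∀ t, f t ∈ K)
    {η : ℝ} (hη : 0 ≤ η) (hmin : ∀ t, IsMinOn (‖· - (f t - η • g t)‖) K (f (t + 1)))
    {B : ℕ} (hB : 0 < B) (T : ℕ) {x : E} (hx : x ∈ K) :
    2 * η * ∑ t ∈ range T, (c t (f (t / B * B)) - c t x)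
      ≤ ‖f 0 - x‖ ^ 2 + η ^ 2 * L ^ 2 * (T * B) := by
  have hgL (t : ℕ) : ‖g t‖ ≤ L := (hg t).norm_le_of_lipschitz (hlip t)
  have hmove (t : ℕ) : ‖f (t + 1) - f t‖ ≤ η * L :=
    calc ‖f (t + 1) - f t‖ ≤ ‖f t - η • g t - f t‖ :=
          hK.norm_sub_le_of_isMinOn (hf _) (hmin t) (hf t)
      _ = η * ‖g t‖ := by rw [sub_sub_cancel_left, norm_neg, norm_smul, Real.norm_of_nonneg hη]
      _ ≤ η * L := by gcongr; exact hgL t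
  have hlag (t : ℕ) : c t (f (t / B * B)) - c t (f t) ≤ L * ((t % B : ℕ) * (η * L)) := by
    have hdrift := norm_sub_le_mul_of_norm_succ_sub_le hmove (t / B * B) (t % B)
    rw [Nat.div_add_mod'] at hdrift
    calc c t (f (t / B * B)) - c t (f t) ≤ dist (c t (f (t / B * B))) (c t (f t)) :=
          (le_abs_self _).trans (Real.dist_eq _ _).ge
      _ ≤ L * dist (f (t / B * B)) (f t) := (hlip t).dist_le_mul _ _
      _ ≤ _ := by rw [dist_comm, dist_eq_norm]; gcongr
  have hstep (t : ℕ) : 2 * η * (c t (f (t / B * B)) - c t x)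
      ≤ ‖f t - x‖ ^ 2 - ‖f (t + 1) - x‖ ^ 2 + η ^ 2 * L ^ 2 * (2 * (t % B : ℕ) + 1) := by
    have hdescent := (hc t).two_mul_sub_le_of_isMinOn hK hη (hg t) (hf t) (hf (t + 1)) (hmin t) hx
    have hlag' := mul_le_mul_of_nonneg_left (hlag t) (by positivity : 0 ≤ 2 * η)
    have hgL' := mul_le_mul_of_nonneg_left (pow_le_pow_left₀ (norm_nonneg _) (hgL t) 2)
      (sq_nonneg η)
    linear_combination hdescent + hlag' + hgL'
  calc 2 * η * ∑ t ∈ range T, (c t (f (t / B * B)) - c t x)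
      ≤ ∑ t ∈ range T, (‖f t - x‖ ^ 2 - ‖f (t + 1) - x‖ ^ 2
          + η ^ 2 * L ^ 2 * (2 * (t % B : ℕ) + 1)) := by
        rw [mul_sum]; exact sum_le_sum fun t _ => hstep t
    _ = ‖f 0 - x‖ ^ 2 - ‖f T - x‖ ^ 2
          + η ^ 2 * L ^ 2 * ((∑ t ∈ range T, (2 * (t % B) + 1) : ℕ) : ℝ) := by
        rw [sum_add_distrib, sum_range_sub' (fun t => ‖f t - x‖ ^ 2), ← mul_sum]; push_cast; rfl
    _ ≤ ‖f 0 - x‖ ^ 2 + η ^ 2 * L ^ 2 * (T * B) := by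
        gcongr ?_ + _ * ?_
        · exact sub_le_self _ (sq_nonneg _)
        · exact_mod_cast sum_range_two_mul_mod_add_one_le hB T

end Hilbert

theorem frozen_ogd_regret_general
    {N : ℕ} (T B : ℕ) (hT : 0 < T) (hB : 0 < B)
    (F : Set (EuclideanSpace ℝ (Fin N))) (hFconv : Convex ℝ F)
    (L R : ℝ) (hL : 0 < L) (hR : 0 ≤ R)
    (c : ℕ → EuclideanSpace ℝ (Fin N) → ℝ)
    (hconv : ∀ t, ConvexOn ℝ F (c t))
    (hlip : ∀ t, LipschitzWith (Real.toNNReal L) (c t))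
    (gc : ℕ → EuclideanSpace ℝ (Fin N) → EuclideanSpace ℝ (Fin N))
    (hgrad : ∀ t x, HasGradientAt (c t) (gc t x) x)
    -- Euclidean projection onto F
    (proj : EuclideanSpace ℝ (Fin N) → EuclideanSpace ℝ (Fin N))
    (hprojmem : ∀ y, proj y ∈ F)
    (hprojmin : ∀ y, ∀ g ∈ F, ‖proj y - y‖ ≤ ‖g - y‖)
    -- f0 attains the radius R of F
    (f0 : EuclideanSpace ℝ (Fin N)) (hf0 : f0 ∈ F)
    (hrad : ∀ g ∈ F, ‖f0 - g‖ ≤ R)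
    -- learning rate
    (η : ℝ) (hη : η = R / (L * Real.sqrt ((T : ℝ) * B)))
    -- iterates
    (f : ℕ → EuclideanSpace ℝ (Fin N))
    (hfzero : f 0 = f0)
    (hfstep : ∀ t, f (t + 1) = proj (f t - η • gc t (f t))) :
    ∀ x ∈ F,
      (∑ t ∈ Finset.range T, c t (f (t / B * B))) - ∑ t ∈ Finset.range T, c t x
        ≤ R * L * Real.sqrt ((T : ℝ) * B) := by
  intro x hx
  have hmem : ∀ t, f t ∈ F := by
    rintro (_ | t)
    · exact hfzero ▸ hf0
    · exact hfstep t ▸ hprojmem _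
  rcases hR.eq_or_lt with rfl | hRpos
  · have hsingleton : ∀ g ∈ F, g = f0 := fun g hg =>
      (sub_eq_zero.1 (norm_le_zero_iff.1 (hrad g hg))).symm
    simp [hsingleton _ (hmem _), hsingleton x hx]
  have hTB : (0 : ℝ) < T * B := mul_pos (Nat.cast_pos.2 hT) (Nat.cast_pos.2 hB)
  have hηpos : 0 < η := by rw [hη]; positivity
  have hregret := two_mul_frozen_regret_le_of_isMinOn hFconv hconv hlip (fun t => hgrad t (f t))
    hmem hηpos.le (fun t => hfstep t ▸ isMinOn_iff.2 (hprojmin _)) hB T hx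
  rw [Real.coe_toNNReal L hL.le] at hregret
  have hinit : ‖f 0 - x‖ ^ 2 ≤ R ^ 2 := by rw [hfzero]; gcongr; exact hrad x hx
  have hbalance : R ^ 2 + η ^ 2 * L ^ 2 * (T * B) = 2 * η * (R * L * √((T : ℝ) * B)) := by
    rw [hη]; field_simp; rw [Real.sq_sqrt hTB.le]; ring
  rw [← sum_sub_distrib]
  exact le_of_mul_le_mul_left (by linarith) (by positivity : 0 < 2 * η)

/-- Regret bound for online gradient descent with frozen (batched) play:
the algorithm updates `f (t+1) = Π_F (f t - η • ∇c_t (f t))` at every step,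
but the played state is `f (⌊t/B⌋·B)`. With `η = radius(F)/(L·√(T·B))`,
the regret is at most `radius(F)·L·√(T·B)`. -/
theorem frozen_ogd_regret
    {N : ℕ} (T B : ℕ) (hT : 0 < T) (hB : 0 < B)
    (F : Set (EuclideanSpace ℝ (Fin N))) (hFconv : Convex ℝ F) (hFclosed : IsClosed F)
    (L R : ℝ) (hL : 0 < L) (hR : 0 ≤ R)
    (c : ℕ → EuclideanSpace ℝ (Fin N) → ℝ)
    (hconv : ∀ t, ConvexOn ℝ F (c t))
    (hlip : ∀ t, LipschitzWith (Real.toNNReal L) (c t))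
    (gc : ℕ → EuclideanSpace ℝ (Fin N) → EuclideanSpace ℝ (Fin N))
    (hgrad : ∀ t x, HasGradientAt (c t) (gc t x) x)
    -- Euclidean projection onto F
    (proj : EuclideanSpace ℝ (Fin N) → EuclideanSpace ℝ (Fin N))
    (hprojmem : ∀ y, proj y ∈ F)
    (hprojmin : ∀ y, ∀ g ∈ F, ‖proj y - y‖ ≤ ‖g - y‖)
    -- f0 attains the radius R of F
    (f0 : EuclideanSpace ℝ (Fin N)) (hf0 : f0 ∈ F)
    (hrad : ∀ g ∈ F, ‖f0 - g‖ ≤ R)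
    (hradmin : ∀ h ∈ F, ∃ g ∈ F, R ≤ ‖h - g‖)
    -- learning rate
    (η : ℝ) (hη : η = R / (L * Real.sqrt ((T : ℝ) * B)))
    -- iterates
    (f : ℕ → EuclideanSpace ℝ (Fin N))
    (hfzero : f 0 = f0)
    (hfstep : ∀ t, f (t + 1) = proj (f t - η • gc t (f t))) :
    ∀ x ∈ F,
      (∑ t ∈ Finset.range T, c t (f (t / B * B))) - ∑ t ∈ Finset.range T, c t x
        ≤ R * L * Real.sqrt ((T : ℝ) * B) :=
  frozen_ogd_regret_general T B hT hB F hFconv L R hL hR c hconv hlip gc hgrad proj hprojmem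
    hprojmin f0 hf0 hrad η hη f hfzero hfstep
end

section
/- The radius of the capped simplex F = {f ∈ [0,1]^N : Σ_i f_i = C} with respect to its 'center' (C/N)·𝟙 equals √(C(1 − C/N)), i.e., sup_{f∈F} ‖f − (C/N)𝟙‖₂ = √(C(1−C/N)), for integer C with 0 ≤ C ≤ N. -/
/-! With `Σ fᵢ = C` fixed, `‖f - (C/N)𝟙‖² = Σ fᵢ² - C²/N`, so the problem is to maximise `Σ fᵢ²`
over the capped simplex. On `[0,1]` one has `fᵢ² ≤ fᵢ`, whence `Σ fᵢ² ≤ Σ fᵢ = C`, with equality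
exactly for `0/1`-vectors; these have `C` ones and exist since `C ≤ N`. -/

open Finset

section Variance

variable {ι : Type*} [Fintype ι]

theorem sum_sub_mean_sq_eq {s : ℝ} (f : ι → ℝ) (hf : ∑ i, f i = s) :
    ∑ i, (f i - s / Fintype.card ι) ^ 2 = ∑ i, f i ^ 2 - s ^ 2 / Fintype.card ι := by
  rcases eq_or_ne (Fintype.card ι : ℝ) 0 with hn | hn
  · have : IsEmpty ι := Fintype.card_eq_zero_iff.mp (by exact_mod_cast hn)
    simp [← hf]
  · simp only [sub_sq, sum_add_distrib, sum_sub_distrib, ← sum_mul, ← mul_sum, hf, sum_const,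
      card_univ, nsmul_eq_mul]
    field_simp
    ring

theorem EuclideanSpace.norm_sub_eq_sqrt_sum_sq_sub {s : ℝ} (f c : EuclideanSpace ℝ ι)
    (hf : ∑ i, f i = s) (hc : ∀ i, c i = s / Fintype.card ι) :
    ‖f - c‖ = √(∑ i, f i ^ 2 - s ^ 2 / Fintype.card ι) := by
  simp only [EuclideanSpace.norm_eq, PiLp.sub_apply, hc, Real.norm_eq_abs, sq_abs,
    sum_sub_mean_sq_eq f hf]

end Variance

theorem sum_sq_le_sum_of_mem_Icc {ι : Type*} (s : Finset ι) (f : ι → ℝ)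
    (hf : ∀ i ∈ s, f i ∈ Set.Icc 0 1) : ∑ i ∈ s, f i ^ 2 ≤ ∑ i ∈ s, f i := by
  refine sum_le_sum fun i hi => ?_
  obtain ⟨h0, h1⟩ := hf i hi
  nlinarith

theorem exists_zero_one_sum_eq {ι : Type*} [Fintype ι] {C : ℕ} (hC : C ≤ Fintype.card ι) :
    ∃ g : ι → ℝ, (∀ i, g i = 0 ∨ g i = 1) ∧ ∑ i, g i = C := by
  classical
  obtain ⟨t, -, ht⟩ := exists_subset_card_eq (s := univ) (by simpa using hC)
  refine ⟨fun i => if i ∈ t then 1 else 0, fun i => ?_, ?_⟩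
  · by_cases hi : i ∈ t <;> simp [hi]
  · simp [ht]

theorem capped_simplex_radius_general (N C : ℕ) (hCN : C ≤ N)
    (F : Set (EuclideanSpace ℝ (Fin N)))
    (hF : F = {f : EuclideanSpace ℝ (Fin N) |
      (∀ i, 0 ≤ f i ∧ f i ≤ 1) ∧ ∑ i, f i = (C : ℝ)})
    (center : EuclideanSpace ℝ (Fin N)) (hcenter : ∀ i, center i = (C : ℝ) / N) :
    IsGreatest ((fun f => ‖f - center‖) '' F) (Real.sqrt ((C : ℝ) * (1 - (C : ℝ) / N))) := by
  subst hF
  have hc : ∀ i, center i = (C : ℝ) / Fintype.card (Fin N) := by simpa using hcenter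
  have hradius : (C : ℝ) * (1 - (C : ℝ) / N) = C - C ^ 2 / Fintype.card (Fin N) := by
    rw [Fintype.card_fin]; ring
  rw [hradius]
  constructor
  · obtain ⟨g, hg01, hgsum⟩ := exists_zero_one_sum_eq (ι := Fin N) (by simpa using hCN)
    have hgsq : ∑ i, g i ^ 2 = C := by
      rw [← hgsum]
      exact sum_congr rfl fun i _ => by rcases hg01 i with h | h <;> simp [h]
    refine ⟨WithLp.toLp 2 g, ⟨fun i => ?_, hgsum⟩, ?_⟩
    · rcases hg01 i with h | h <;> simp [h]
    · simp only [EuclideanSpace.norm_sub_eq_sqrt_sum_sq_sub _ _ hgsum hc, hgsq]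
  · rintro _ ⟨f, ⟨hf01, hfsum⟩, rfl⟩
    change ‖f - center‖ ≤ _
    rw [EuclideanSpace.norm_sub_eq_sqrt_sum_sq_sub f center hfsum hc]
    have hsq := sum_sq_le_sum_of_mem_Icc univ f fun i _ => hf01 i
    gcongr
    linarith

/-- The radius of the capped simplex `F = {f ∈ [0,1]^N : ∑ f_i = C}` with respect to its
center `(C/N)·𝟙` equals `√(C(1 - C/N))`: the supremum of `‖f - (C/N)𝟙‖₂` over `F` is
attained and equals `√(C(1 - C/N))`, for an integer `0 ≤ C ≤ N`. -/
theorem capped_simplex_radius (N C : ℕ) (hN : 0 < N) (hCN : C ≤ N)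
    (F : Set (EuclideanSpace ℝ (Fin N)))
    (hF : F = {f : EuclideanSpace ℝ (Fin N) |
      (∀ i, 0 ≤ f i ∧ f i ≤ 1) ∧ ∑ i, f i = (C : ℝ)})
    (center : EuclideanSpace ℝ (Fin N)) (hcenter : ∀ i, center i = (C : ℝ) / N) :
    IsGreatest ((fun f => ‖f - center‖) '' F) (Real.sqrt ((C : ℝ) * (1 - (C : ℝ) / N))) :=
  capped_simplex_radius_general N C hCN F hF center hcenter
end

section
/- Online gradient descent with per-step updates and learning rate η = √(C(1−C/N)/(TB)), operating on the capped simplex with linear reward functions φ_t(f) = ⟨r_t, f⟩ where r_t is a one-hot vector, when the played state is frozen over batches of B steps, has regret at most √(C(1−C/N)·T·B). -/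
/-!
Projecting onto a convex set does not increase the distance to any of its points, so each
per-step iterate satisfies `2η⟪r_t, x - f_t⟫ ≤ ‖f_t - x‖² - ‖f_{t+1} - x‖² + η²`; telescoping gives
`∑ ⟪r_t, x - f_t⟫ ≤ ‖f_0 - x‖²/(2η) + ηT/2`. The played state `f_{⌊t/B⌋B}` lags `f_t` by
`t mod B` steps of length at most `η`, which costs at most `ηT(B-1)/2` in total. On the capped
simplex `‖f_0 - x‖² ≤ C(1 - C/N)`, and the chosen `η` balances the two terms at `√(C(1-C/N)TB)`.
-/

open Finset
open scoped InnerProductSpace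

section Projection

variable {E : Type*} [NormedAddCommGroup E] [InnerProductSpace ℝ E] {K : Set E} {y p g : E}

theorem real_inner_sub_le_zero_of_forall_norm_le (hK : Convex ℝ K) (hp : p ∈ K)
    (hmin : ∀ w ∈ K, ‖p - y‖ ≤ ‖w - y‖) (hg : g ∈ K) : ⟪y - p, g - p⟫_ℝ ≤ 0 := by
  have : Nonempty K := ⟨⟨p, hp⟩⟩
  refine (norm_eq_iInf_iff_real_inner_le_zero hK hp).mp ?_ g hg
  refine le_antisymm (le_ciInf fun w => ?_) (ciInf_le ⟨0, ?_⟩ (⟨p, hp⟩ : K))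
  · simpa only [norm_sub_rev y] using hmin w w.2
  · rintro _ ⟨w, rfl⟩
    exact norm_nonneg _

theorem norm_sub_sq_le_of_forall_norm_le (hK : Convex ℝ K) (hp : p ∈ K)
    (hmin : ∀ w ∈ K, ‖p - y‖ ≤ ‖w - y‖) (hg : g ∈ K) : ‖p - g‖ ^ 2 ≤ ‖y - g‖ ^ 2 := by
  have hobtuse := real_inner_sub_le_zero_of_forall_norm_le hK hp hmin hg
  have hsplit : y - g = (y - p) - (g - p) := by abel
  rw [hsplit, norm_sub_sq_real (y - p), norm_sub_rev p]
  nlinarith [sq_nonneg ‖y - p‖]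

end Projection

theorem two_mul_sum_range_mod_le {B : ℕ} (hB : 0 < B) (T : ℕ) :
    2 * ∑ t ∈ range T, t % B ≤ T * (B - 1) := by
  have hwithin {n : ℕ} (hn : n ≤ B) : 2 * ∑ t ∈ range n, t % B ≤ n * (B - 1) := by
    rw [sum_congr rfl fun t ht => Nat.mod_eq_of_lt ((mem_range.1 ht).trans_le hn), mul_comm,
      sum_range_id_mul_two]
    exact Nat.mul_le_mul_left _ (by omega)
  induction T using Nat.strong_induction_on with
  | _ T ih =>
    rcases le_or_gt T B with hTB | hBT
    · exact hwithin hTB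
    obtain ⟨T', rfl⟩ := Nat.exists_eq_add_of_le hBT.le
    rw [sum_range_add]
    simp only [Nat.add_mod_left]
    have hrest := ih T' (by omega)
    have hfirst := hwithin le_rfl
    rw [mul_add, add_mul]
    linarith

section OnlineGradientAscent

variable {E : Type*} [NormedAddCommGroup E] [InnerProductSpace ℝ E] {K : Set E} {proj : E → E}
  {f v : ℕ → E} {η G : ℝ}

theorem norm_proj_add_smul_sub_sq_le (hK : Convex ℝ K) (hprojmem : ∀ y, proj y ∈ K)
    (hprojmin : ∀ y, ∀ g ∈ K, ‖proj y - y‖ ≤ ‖g - y‖) (z w : E) {g : E} (hg : g ∈ K) :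
    ‖proj (z + η • w) - g‖ ^ 2 ≤ ‖z - g‖ ^ 2 - 2 * η * ⟪w, g - z⟫_ℝ + η ^ 2 * ‖w‖ ^ 2 := by
  refine (norm_sub_sq_le_of_forall_norm_le hK (hprojmem _) (hprojmin _) hg).trans_eq ?_
  rw [show z + η • w - g = (z - g) + η • w by abel, norm_add_sq_real, real_inner_smul_right,
    norm_smul, mul_pow, Real.norm_eq_abs, sq_abs, real_inner_comm, ← neg_sub g z, inner_neg_right]
  ring

variable (hK : Convex ℝ K) (hprojmem : ∀ y, proj y ∈ K)
  (hprojmin : ∀ y, ∀ g ∈ K, ‖proj y - y‖ ≤ ‖g - y‖)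
  (hstep : ∀ t, f (t + 1) = proj (f t + η • v t)) (hv : ∀ t, ‖v t‖ ≤ G)
include hK hprojmem hprojmin hstep hv

theorem sum_inner_sub_le_of_projected_gradient (hη : 0 < η) {x : E} (hx : x ∈ K) (T : ℕ) :
    ∑ t ∈ range T, ⟪v t, x - f t⟫_ℝ ≤ ‖f 0 - x‖ ^ 2 / (2 * η) + η * G ^ 2 * T / 2 := by
  have hdescent (t : ℕ) :
      2 * η * ⟪v t, x - f t⟫_ℝ ≤ ‖f t - x‖ ^ 2 - ‖f (t + 1) - x‖ ^ 2 + η ^ 2 * G ^ 2 := by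
    have := norm_proj_add_smul_sub_sq_le hK hprojmem hprojmin (η := η) (f t) (v t) hx
    rw [← hstep] at this
    have : ‖v t‖ ^ 2 ≤ G ^ 2 := pow_le_pow_left₀ (norm_nonneg _) (hv t) 2
    nlinarith
  have htel : 2 * η * ∑ t ∈ range T, ⟪v t, x - f t⟫_ℝ ≤ ‖f 0 - x‖ ^ 2 + η ^ 2 * G ^ 2 * T := by
    calc 2 * η * ∑ t ∈ range T, ⟪v t, x - f t⟫_ℝ
        ≤ ∑ t ∈ range T, (‖f t - x‖ ^ 2 - ‖f (t + 1) - x‖ ^ 2 + η ^ 2 * G ^ 2) := by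
          rw [mul_sum]; exact sum_le_sum fun t _ => hdescent t
      _ = ‖f 0 - x‖ ^ 2 - ‖f T - x‖ ^ 2 + η ^ 2 * G ^ 2 * T := by
          rw [sum_add_distrib, sum_range_sub' (fun t => ‖f t - x‖ ^ 2), sum_const, card_range,
            nsmul_eq_mul, mul_comm]
      _ ≤ ‖f 0 - x‖ ^ 2 + η ^ 2 * G ^ 2 * T := by linarith [sq_nonneg ‖f T - x‖]
  calc ∑ t ∈ range T, ⟪v t, x - f t⟫_ℝ
      = 2 * η * (∑ t ∈ range T, ⟪v t, x - f t⟫_ℝ) / (2 * η) :=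
        (mul_div_cancel_left₀ _ (by positivity)).symm
    _ ≤ (‖f 0 - x‖ ^ 2 + η ^ 2 * G ^ 2 * T) / (2 * η) := by gcongr
    _ = ‖f 0 - x‖ ^ 2 / (2 * η) + η * G ^ 2 * T / 2 := by field_simp

theorem norm_add_sub_le_of_projected_gradient (hη : 0 ≤ η) (hf0 : f 0 ∈ K) (a b : ℕ) :
    ‖f (a + b) - f a‖ ≤ b * (η * G) := by
  have hmem : ∀ t, f t ∈ K := by
    rintro (_ | t)
    · exact hf0
    · rw [hstep]; exact hprojmem _
  have hmove (t : ℕ) : ‖f (t + 1) - f t‖ ≤ η * G := by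
    have := norm_proj_add_smul_sub_sq_le hK hprojmem hprojmin (η := η) (f t) (v t) (hmem t)
    rw [← hstep, sub_self, norm_zero, inner_zero_right] at this
    have hG : ‖v t‖ ^ 2 ≤ G ^ 2 := pow_le_pow_left₀ (norm_nonneg _) (hv t) 2
    have hηG : 0 ≤ η * G := mul_nonneg hη ((norm_nonneg _).trans (hv t))
    refine abs_le_of_sq_le_sq' ?_ hηG |>.2
    nlinarith
  induction b with
  | zero => simp
  | succ b ih =>
    calc ‖f (a + (b + 1)) - f a‖ ≤ ‖f (a + b + 1) - f (a + b)‖ + ‖f (a + b) - f a‖ :=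
          norm_sub_le_norm_sub_add_norm_sub _ _ _
      _ ≤ η * G + b * (η * G) := add_le_add (hmove _) ih
      _ = (b + 1 : ℕ) * (η * G) := by push_cast; ring

theorem sum_inner_sub_batched_le_of_projected_gradient (hη : 0 < η) (hf0 : f 0 ∈ K)
    {B : ℕ} (hB : 0 < B) {x : E} (hx : x ∈ K) (T : ℕ) :
    ∑ t ∈ range T, ⟪v t, x - f (t / B * B)⟫_ℝ
      ≤ ‖f 0 - x‖ ^ 2 / (2 * η) + η * G ^ 2 * T * B / 2 := by
  have hdrift (t : ℕ) : ⟪v t, f t - f (t / B * B)⟫_ℝ ≤ η * G ^ 2 * (t % B : ℕ) := by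
    have hlag := norm_add_sub_le_of_projected_gradient hK hprojmem hprojmin hstep hv hη.le hf0
      (t / B * B) (t % B)
    rw [Nat.div_add_mod'] at hlag
    calc ⟪v t, f t - f (t / B * B)⟫_ℝ ≤ ‖v t‖ * ‖f t - f (t / B * B)‖ := real_inner_le_norm _ _
      _ ≤ G * ((t % B : ℕ) * (η * G)) := by gcongr; exacts [(norm_nonneg _).trans (hv t), hv t]
      _ = η * G ^ 2 * (t % B : ℕ) := by ring
  have hlagsum : 2 * ∑ t ∈ range T, ((t % B : ℕ) : ℝ) ≤ T * (B - 1) := by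
    have := two_mul_sum_range_mod_le hB T
    rw [← Nat.cast_le (α := ℝ)] at this
    push_cast [Nat.cast_sub hB] at this
    exact this
  calc ∑ t ∈ range T, ⟪v t, x - f (t / B * B)⟫_ℝ
      = ∑ t ∈ range T, ⟪v t, x - f t⟫_ℝ + ∑ t ∈ range T, ⟪v t, f t - f (t / B * B)⟫_ℝ := by
        rw [← sum_add_distrib]
        exact sum_congr rfl fun t _ => by rw [← inner_add_right, sub_add_sub_cancel]
    _ ≤ (‖f 0 - x‖ ^ 2 / (2 * η) + η * G ^ 2 * T / 2) + η * G ^ 2 * (T * (B - 1) / 2) := by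
        gcongr ?_ + ?_
        · exact sum_inner_sub_le_of_projected_gradient hK hprojmem hprojmin hstep hv hη hx T
        · refine (sum_le_sum fun t _ => hdrift t).trans ?_
          rw [← mul_sum]
          gcongr
          linarith
    _ = ‖f 0 - x‖ ^ 2 / (2 * η) + η * G ^ 2 * T * B / 2 := by ring

end OnlineGradientAscent

section CappedSimplex

def cappedSimplex (N : ℕ) (C : ℝ) : Set (EuclideanSpace ℝ (Fin N)) :=
  {f | (∀ i, 0 ≤ f i ∧ f i ≤ 1) ∧ ∑ i, f i = C}

theorem convex_cappedSimplex (N : ℕ) (C : ℝ) : Convex ℝ (cappedSimplex N C) := by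
  rintro p ⟨hp, hpsum⟩ q ⟨hq, hqsum⟩ a b ha hb hab
  simp only [cappedSimplex, Set.mem_ofPred_eq, PiLp.add_apply, PiLp.smul_apply, smul_eq_mul]
  refine ⟨fun i => ⟨by nlinarith [hp i, hq i], by nlinarith [hp i, hq i]⟩, ?_⟩
  rw [sum_add_distrib, ← mul_sum, ← mul_sum, hpsum, hqsum, ← add_mul, hab, one_mul]

variable {N : ℕ} {C : ℝ} {u x : EuclideanSpace ℝ (Fin N)}

theorem mem_cappedSimplex_of_forall_eq_div (hN : 0 < N) (hC : 0 ≤ C) (hCN : C ≤ N)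
    (hu : ∀ i, u i = C / N) : u ∈ cappedSimplex N C := by
  have hN' : (0 : ℝ) < N := by exact_mod_cast hN
  refine ⟨fun i => ?_, ?_⟩
  · rw [hu]
    exact ⟨by positivity, (div_le_one hN').2 hCN⟩
  · simp only [hu, sum_const, card_univ, Fintype.card_fin, nsmul_eq_mul]
    field_simp

theorem norm_sub_sq_le_of_forall_eq_div (hN : 0 < N) (hu : ∀ i, u i = C / N)
    (hx : x ∈ cappedSimplex N C) : ‖u - x‖ ^ 2 ≤ C * (1 - C / N) := by
  obtain ⟨hx, hxsum⟩ := hx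
  calc ‖u - x‖ ^ 2 = ∑ i, (C / N - x i) ^ 2 := by
        simp only [EuclideanSpace.norm_sq_eq, PiLp.sub_apply, hu, Real.norm_eq_abs, sq_abs]
    _ ≤ ∑ i, ((C / N) ^ 2 - 2 * (C / N) * x i + x i) := by
        gcongr with i
        nlinarith [hx i]
    _ = C * (1 - C / N) := by
        rw [sum_add_distrib, sum_sub_distrib, ← mul_sum, hxsum, sum_const, card_univ,
          Fintype.card_fin, nsmul_eq_mul]
        have : (N : ℝ) ≠ 0 := by positivity
        field_simp
        ring

theorem norm_eq_one_of_isOneHot {r : EuclideanSpace ℝ (Fin N)}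
    (hr : ∃ j, r j = 1 ∧ ∀ i, i ≠ j → r i = 0) : ‖r‖ = 1 := by
  obtain ⟨j, hj, hzero⟩ := hr
  have : r = EuclideanSpace.single j 1 := by
    ext i
    rcases eq_or_ne i j with rfl | hij
    · simp [hj]
    · simp [hzero i hij, hij]
  rw [this, PiLp.norm_single, norm_one]

theorem sum_mul_eq_inner (r x : EuclideanSpace ℝ (Fin N)) : ∑ i, r i * x i = ⟪r, x⟫_ℝ := by
  simp [PiLp.inner_apply, mul_comm]

end CappedSimplex

/-- Regret bound for per-step online gradient ascent on the capped simplex with one-hot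
linear rewards `φ_t(f) = ⟨r_t, f⟩`, frozen over batches of `B` steps: with learning rate
`η = √(C(1-C/N)/(TB))`, the regret is at most `√(C(1-C/N)·T·B)`. -/
theorem ogb_capped_simplex_regret (N C T B : ℕ)
    (hT : 0 < T) (hB : 0 < B) (hC : 0 < C) (hCN : C < N)
    (F : Set (EuclideanSpace ℝ (Fin N)))
    (hF : F = {f : EuclideanSpace ℝ (Fin N) |
      (∀ i, 0 ≤ f i ∧ f i ≤ 1) ∧ ∑ i, f i = (C : ℝ)})
    -- one-hot request vectors
    (r : ℕ → EuclideanSpace ℝ (Fin N))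
    (hone : ∀ t, ∃ j, r t j = 1 ∧ ∀ i, i ≠ j → r t i = 0)
    -- Euclidean projection onto F
    (proj : EuclideanSpace ℝ (Fin N) → EuclideanSpace ℝ (Fin N))
    (hprojmem : ∀ y, proj y ∈ F)
    (hprojmin : ∀ y, ∀ g ∈ F, ‖proj y - y‖ ≤ ‖g - y‖)
    -- learning rate
    (η : ℝ) (hη : η = Real.sqrt ((C : ℝ) * (1 - (C : ℝ) / N) / ((T : ℝ) * B)))
    -- per-step iterates, starting from the uniform allocation
    (f : ℕ → EuclideanSpace ℝ (Fin N))
    (hf0 : ∀ i, f 0 i = (C : ℝ) / N)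
    (hfstep : ∀ t, f (t + 1) = proj (f t + η • r t)) :
    ∀ x ∈ F,
      (∑ t ∈ Finset.range T, ∑ i, r t i * x i)
        - ∑ t ∈ Finset.range T, ∑ i, r t i * f (t / B * B) i
      ≤ Real.sqrt ((C : ℝ) * (1 - (C : ℝ) / N) * T * B) := by
  change F = cappedSimplex N C at hF
  subst hF
  intro x hx
  have hN : 0 < N := hC.trans hCN
  set D : ℝ := C * (1 - C / N)
  have hD : 0 < D := mul_pos (by positivity) (by
    rw [sub_pos, div_lt_one (by positivity)]; exact_mod_cast hCN)
  have hη2 : η ^ 2 * (T * B) = D := by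
    rw [hη, Real.sq_sqrt (by positivity), div_mul_cancel₀ _ (by positivity)]
  have hη0 : 0 < η := hη ▸ Real.sqrt_pos.2 (by positivity)
  have hregret := sum_inner_sub_batched_le_of_projected_gradient (convex_cappedSimplex N C)
    hprojmem hprojmin hfstep (fun t => (norm_eq_one_of_isOneHot (hone t)).le) hη0
    (mem_cappedSimplex_of_forall_eq_div hN (by positivity) (by exact_mod_cast hCN.le) hf0) hB hx T
  calc (∑ t ∈ range T, ∑ i, r t i * x i) - ∑ t ∈ range T, ∑ i, r t i * f (t / B * B) i
      = ∑ t ∈ range T, ⟪r t, x - f (t / B * B)⟫_ℝ := by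
        simp only [sum_mul_eq_inner, inner_sub_right, sum_sub_distrib]
    _ ≤ D / (2 * η) + η * 1 ^ 2 * T * B / 2 := by
        grw [hregret, norm_sub_sq_le_of_forall_eq_div hN hf0 hx]
    _ = η * (T * B) := by rw [← hη2]; field_simp; ring
    _ = Real.sqrt (D * T * B) := by
        rw [mul_assoc D, ← hη2, show η ^ 2 * (T * B) * (T * B) = (η * (T * B)) ^ 2 by ring,
          Real.sqrt_sq (by positivity)]
end

section
/- The Euclidean projection onto the capped simplex is invariant under adding the excess back to a saturated coordinate: if f ∈ F with f_j = 1 and y = f + η·e_j for η > 0, then Π_F(y) = f. -/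
/-- The Euclidean projection onto the capped simplex is invariant under adding the
excess to a saturated coordinate: if `f ∈ F` with `f_j = 1` and `y = f + η·e_j`
with `η > 0`, then `Π_F(y) = f` (i.e. `f` is the unique minimizer of `‖· - y‖` over `F`). -/
theorem capped_simplex_projection_saturated (N C : ℕ) (hC : 0 < C) (hCN : C < N)
    (F : Set (EuclideanSpace ℝ (Fin N)))
    (hF : F = {g : EuclideanSpace ℝ (Fin N) |
      (∀ i, 0 ≤ g i ∧ g i ≤ 1) ∧ ∑ i, g i = (C : ℝ)})
    (f : EuclideanSpace ℝ (Fin N)) (hfF : f ∈ F)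
    (j : Fin N) (hfj : f j = 1)
    (η : ℝ) (hη : 0 < η)
    (y : EuclideanSpace ℝ (Fin N)) (hy : y = f + EuclideanSpace.single j η) :
    (∀ g ∈ F, ‖f - y‖ ≤ ‖g - y‖) ∧
      (∀ g ∈ F, (∀ h ∈ F, ‖g - y‖ ≤ ‖h - y‖) → g = f) := by
  have hfy : ‖f - y‖ = η := by
    rw [hy]
    have : f - (f + EuclideanSpace.single j η) = -(EuclideanSpace.single j η) := by
      abel
    rw [this, norm_neg, EuclideanSpace.norm_single, Real.norm_eq_abs, abs_of_pos hη]
  have key : ∀ g : EuclideanSpace ℝ (Fin N), g ∈ F →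
      ‖g - y‖ ^ 2 = ‖g - f‖ ^ 2 + 2 * η * (1 - g j) + η ^ 2 := by
    intro g hg
    have h1 : g - y = (g - f) - EuclideanSpace.single j η := by rw [hy]; abel
    rw [h1, norm_sub_sq_real, EuclideanSpace.inner_single_right,
      EuclideanSpace.norm_single, Real.norm_eq_abs, abs_of_pos hη]
    have : (g - f) j = g j - 1 := by
      simp [hfj]
    rw [RCLike.conj_to_real, this]
    ring
  constructor
  · intro g hg
    have hsq : ‖f - y‖ ^ 2 ≤ ‖g - y‖ ^ 2 := by
      rw [key g hg, hfy]
      have hgj : g j ≤ 1 := by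
        rw [hF] at hg; exact (hg.1 j).2
      nlinarith [sq_nonneg ‖g - f‖]
    have := norm_nonneg (g - y)
    nlinarith [norm_nonneg (f - y)]
  · intro g hg hmin
    have h1 : ‖g - y‖ ≤ ‖f - y‖ := hmin f hfF
    have hgj : g j ≤ 1 := by rw [hF] at hg; exact (hg.1 j).2
    have hsq : ‖g - y‖ ^ 2 ≤ η ^ 2 := by
      rw [← hfy]
      exact pow_le_pow_left₀ (norm_nonneg _) h1 2
    rw [key g hg] at hsq
    have hgf : ‖g - f‖ ^ 2 ≤ 0 := by nlinarith
    have : ‖g - f‖ = 0 := le_antisymm (by nlinarith [norm_nonneg (g - f)]) (norm_nonneg _)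
    have := norm_sub_eq_zero_iff.mp this
    exact this
end
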